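/- arXiv:1309.7645 — 4 statements merged into one kernel-verified Lean document; each statement's English description precedes it below -/
import Mathlib

section
/- In the seminal-curve recursion, for every n ≥ 0 one has E[3^n · Y_n³/S_n] ≤ (3/10)^n · E[Y_0³] + (12/7)·E[Y_0]; in particular, since Γ has a Rayleigh(√2) distribution and hence E[Y_0³] and E[Y_0] are finite, there is a finite constant C (one may take C = E[Y_0³] + (12/7)·E[Y_0]) such that E[Y_n³/S_n] ≤ C · 3^{−n} for all n ≥ 0. -/
/-!
Write `A n = E[Y n ^ 3 / S n]` and `B n = E[Y n]`. The recursion gives the pointwise identity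
`Y (n+1) ^ 3 / S (n+1) = (1 - √U n) ^ 3 * (Y n ^ 3 / S n + 4 * Y n * E n)`, in which `U n` is
independent of `(Y n, S n, E n)` (all three are measurable for the σ-algebra generated by `Γ`,
`V` and the earlier `U i`, `E i`) and `E n` is independent of `Y n`. With
`E[(1 - √U) ^ k] = 2 / ((k + 1) (k + 2))` and `E[E n] = 1` this yields
`A (n+1) = (A n + 4 B n) / 10` and `B (n+1) = B n / 3`, which solve to
`3 ^ n A n = (3/10) ^ n (A 0 - 12/7 B 0) + 12/7 B 0`. Everything is integrable because
`0 ≤ Y 0 ≤ Γ` and `Γ` has a Gaussian tail.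
-/

open MeasureTheory ProbabilityTheory Filter

/-- The σ-algebra `F n` generated by `Γ`, `V`, and `U_1, …, U_n`, `E_1, …, E_n`.
(Here the random variables `U i`, `E i` of the Lean formalization, for `i < n`,
represent the mathematical `U_{i+1}`, `E_{i+1}`: the indexing is shifted by one.) -/
def seminalFiltration {Ω : Type*} [MeasurableSpace Ω] (U E : ℕ → Ω → ℝ) (Γ V : Ω → ℝ)
    (n : ℕ) : MeasurableSpace Ω :=
  MeasurableSpace.comap Γ inferInstance ⊔ MeasurableSpace.comap V inferInstance ⊔
    ⨆ i < n, (MeasurableSpace.comap (U i) inferInstance ⊔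
      MeasurableSpace.comap (E i) inferInstance)

open Set Real

theorem integral_one_sub_sqrt_pow (k : ℕ) :
    ∫ x in (0:ℝ)..1, (1 - √x) ^ k = 2 / ((k + 1) * (k + 2)) := by
  have hsq : ∫ x in (0:ℝ)..1, (1 - √x) ^ k = ∫ t in (0:ℝ)..1, (1 - t) ^ k * (2 * t) := by
    have h := intervalIntegral.integral_comp_mul_deriv (a := 0) (b := 1) (f := fun t => t ^ 2)
      (f' := fun t => 2 * t) (g := fun x => (1 - √x) ^ k)
      (fun t _ => by simpa using hasDerivAt_pow 2 t) (by fun_prop) (by fun_prop)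
    norm_num at h
    rw [← h]
    refine intervalIntegral.integral_congr fun t ht => ?_
    rw [uIcc_of_le zero_le_one] at ht
    simp [sqrt_sq ht.1]
  have hflip : ∫ t in (0:ℝ)..1, (1 - t) ^ k * (2 * t)
      = ∫ t in (0:ℝ)..1, (2 * t ^ k - 2 * t ^ (k + 1)) := by
    have h := intervalIntegral.integral_comp_sub_left (a := 0) (b := 1)
      (fun t => (1 - t) ^ k * (2 * t)) (1:ℝ)
    norm_num at h
    rw [← h]
    exact intervalIntegral.integral_congr fun t _ => by ring
  rw [hsq, hflip, intervalIntegral.integral_sub, intervalIntegral.integral_const_mul,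
    intervalIntegral.integral_const_mul, integral_pow, integral_pow]
  · field_simp
    push_cast
    ring
  all_goals exact (continuous_const.mul (continuous_pow _)).intervalIntegrable _ _

-- At `y = 0` the junk value `4 / 0 ^ 2 = 0` gives `s' = s`, and both sides vanish.
theorem mul_pow_three_div_of_one_div_eq {y c s s' e : ℝ}
    (hs' : 1 / s' = 1 / s + 4 / y ^ 2 * e) :
    (y * c) ^ 3 / s' = c ^ 3 * (y ^ 3 / s + 4 * (y * e)) := by
  rw [div_eq_mul_one_div, hs']
  rcases eq_or_ne y 0 with rfl | hy
  · simp
  · field_simp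

theorem pow_mul_eq_of_recursion {a b : ℕ → ℝ} (ha : ∀ n, a (n + 1) = (a n + 4 * b n) / 10)
    (hb : ∀ n, b (n + 1) = b n / 3) (n : ℕ) :
    3 ^ n * a n = (3 / 10) ^ n * (a 0 - 12 / 7 * b 0) + 12 / 7 * b 0 := by
  have hb' : ∀ n, 3 ^ n * b n = b 0 := fun n => by
    induction n with
    | zero => simp
    | succ n ih => rw [hb, pow_succ, ← ih]; ring
  induction n with
  | zero => simp
  | succ n ih =>
    calc 3 ^ (n + 1) * a (n + 1) = 3 / 10 * (3 ^ n * a n) + 6 / 5 * (3 ^ n * b n) := by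
          rw [ha, pow_succ]; ring
      _ = _ := by rw [ih, hb', pow_succ]; ring

theorem ae_nonneg_expMeasure (r : ℝ) : ∀ᵐ x ∂(expMeasure r), 0 ≤ x := by
  have hneg : expMeasure r (Iio 0) = 0 := by
    rw [expMeasure, gammaMeasure, withDensity_apply _ measurableSet_Iio]
    exact lintegral_exponentialPDF_of_nonpos le_rfl
  simp only [ae_iff, not_le]
  exact hneg

theorem lintegral_ofReal_expMeasure {r : ℝ} (hr : 0 < r) :
    ∫⁻ x, ENNReal.ofReal x ∂(expMeasure r) = ENNReal.ofReal (1 / r) := by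
  -- The density times `x` is written as `r * (x ^ (2 - 1) * exp (-(r * x)))` to match the
  -- Gamma integral `integral_rpow_mul_exp_neg_mul_Ioi` at `a = 2`.
  have hint : IntegrableOn (fun x => r * (x ^ ((2:ℝ) - 1) * exp (-(r * x)))) (Ioi 0) := by
    have h : IntegrableOn (fun x : ℝ => r * (x ^ (1:ℝ) * exp (-r * x ^ (1:ℝ)))) (Ioi 0) :=
      (integrableOn_rpow_mul_exp_neg_mul_rpow (by norm_num) one_pos hr).const_mul r
    exact h.congr_fun (fun x _ => by norm_num) measurableSet_Ioi
  have hdens : ∀ x, exponentialPDF r x * ENNReal.ofReal x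
      = (Ioi 0).indicator (fun x => ENNReal.ofReal (r * (x ^ ((2:ℝ) - 1) * exp (-(r * x))))) x := by
    intro x
    rcases le_or_gt x 0 with hx | hx
    · rw [indicator_of_notMem (by simpa using hx), ENNReal.ofReal_of_nonpos hx, mul_zero]
    · rw [indicator_of_mem (mem_Ioi.2 hx), exponentialPDF_eq, if_pos hx.le,
        ← ENNReal.ofReal_mul (by positivity)]
      norm_num
      ring_nf
  rw [expMeasure, gammaMeasure, lintegral_withDensity_eq_lintegral_mul (f := gammaPDF 1 r) _
    (measurable_gammaPDFReal 1 r).ennreal_ofReal ENNReal.measurable_ofReal]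
  simp_rw [Pi.mul_apply]
  change ∫⁻ x, exponentialPDF r x * ENNReal.ofReal x = _
  simp_rw [hdens]
  rw [lintegral_indicator measurableSet_Ioi, ← ofReal_integral_eq_lintegral_ofReal hint
    ((ae_restrict_iff' measurableSet_Ioi).2 (.of_forall fun x (hx : 0 < x) => by positivity)),
    integral_const_mul, integral_rpow_mul_exp_neg_mul_Ioi two_pos hr, Gamma_two]
  congr 1
  rw [rpow_two]
  field_simp

theorem integrable_id_expMeasure {r : ℝ} (hr : 0 < r) : Integrable (fun x => x) (expMeasure r) :=
  ⟨aestronglyMeasurable_id, by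
    rw [hasFiniteIntegral_iff_ofReal (ae_nonneg_expMeasure r), lintegral_ofReal_expMeasure hr]
    exact ENNReal.ofReal_lt_top⟩

theorem integral_id_expMeasure {r : ℝ} (hr : 0 < r) : ∫ x, x ∂(expMeasure r) = 1 / r := by
  rw [integral_eq_lintegral_of_nonneg_ae (ae_nonneg_expMeasure r) aestronglyMeasurable_id,
    lintegral_ofReal_expMeasure hr, ENNReal.toReal_ofReal (by positivity)]

section RandomVariables

variable {Ω : Type*} [MeasurableSpace Ω] {μ : Measure Ω}

theorem integrable_rpow_of_meas_lt_le_exp_neg_mul_sq {f : Ω → ℝ} (hf : 0 ≤ᵐ[μ] f)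
    (hfm : AEMeasurable f μ) {c : ℝ} (hc : 0 < c)
    (htail : ∀ t, 0 < t → μ {ω | t < f ω} ≤ ENNReal.ofReal (exp (-c * t ^ 2)))
    {p : ℝ} (hp : 0 < p) : Integrable (fun ω => f ω ^ p) μ := by
  refine ⟨(hfm.pow_const p).aestronglyMeasurable, ?_⟩
  rw [hasFiniteIntegral_iff_ofReal (hf.mono fun ω hω => rpow_nonneg hω p),
    lintegral_rpow_eq_lintegral_meas_lt_mul μ hf hfm hp]
  refine ENNReal.mul_lt_top ENNReal.ofReal_lt_top ?_
  calc ∫⁻ t in Ioi 0, μ {ω | t < f ω} * ENNReal.ofReal (t ^ (p - 1))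
      ≤ ∫⁻ t in Ioi 0, ENNReal.ofReal (t ^ (p - 1) * exp (-c * t ^ 2)) := by
        refine setLIntegral_mono' measurableSet_Ioi fun t (ht : 0 < t) => ?_
        rw [ENNReal.ofReal_mul (by positivity), mul_comm]
        gcongr
        exact htail t ht
    _ < ⊤ := (integrableOn_rpow_mul_exp_neg_mul_sq hc (by linarith)).lintegral_lt_top

variable {X : Ω → ℝ}

theorem ae_mem_Icc_of_map_eq_uniform (hXm : AEMeasurable X μ)
    (hX : μ.map X = volume.restrict (Icc 0 1)) : ∀ᵐ ω ∂μ, X ω ∈ Icc 0 1 :=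
  ae_of_ae_map hXm (hX ▸ ae_restrict_mem measurableSet_Icc)

theorem integrable_one_sub_sqrt_pow_of_map_eq_uniform (hXm : AEMeasurable X μ)
    (hX : μ.map X = volume.restrict (Icc 0 1)) (k : ℕ) :
    Integrable (fun ω => (1 - √(X ω)) ^ k) μ := by
  have h : Integrable (fun x : ℝ => (1 - √x) ^ k) (μ.map X) := by
    rw [hX]
    exact (by fun_prop : Continuous fun x : ℝ => (1 - √x) ^ k).integrableOn_Icc
  exact h.comp_aemeasurable hXm

theorem integral_one_sub_sqrt_pow_of_map_eq_uniform (hXm : AEMeasurable X μ)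
    (hX : μ.map X = volume.restrict (Icc 0 1)) (k : ℕ) :
    ∫ ω, (1 - √(X ω)) ^ k ∂μ = 2 / ((k + 1) * (k + 2)) := by
  rw [← integral_map hXm (by fun_prop : Continuous fun x : ℝ => (1 - √x) ^ k).aestronglyMeasurable,
    hX, integral_Icc_eq_integral_Ioc, ← intervalIntegral.integral_of_le zero_le_one,
    integral_one_sub_sqrt_pow]

end RandomVariables

theorem ProbabilityTheory.iIndepFun.indepFun_of_measurable_iSup_compl {Ω ι β γ : Type*}
    {mΩ : MeasurableSpace Ω} {μ : Measure Ω} [mβ : MeasurableSpace β] [MeasurableSpace γ]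
    {X : ι → Ω → β}
    (hX : iIndepFun X μ) (hXm : ∀ j, Measurable (X j)) {i : ι} {g : Ω → γ}
    (hg : Measurable[⨆ j ∈ ({i}ᶜ : Set ι), mβ.comap (X j)] g) : IndepFun (X i) g μ := by
  have h := indep_iSup_of_disjoint (fun j => (hXm j).comap_le) hX.iIndep
    (disjoint_compl_right (a := ({i} : Set ι)))
  rw [iSup_singleton] at h
  exact (IndepFun_iff_Indep _ _ _).2 (indep_of_indep_of_le_right h hg.comap_le)

section SeminalFiltration

variable {Ω : Type*} [MeasurableSpace Ω] {U E : ℕ → Ω → ℝ} {Γ V : Ω → ℝ}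

theorem measurable_Γ_seminalFiltration (n : ℕ) : Measurable[seminalFiltration U E Γ V n] Γ :=
  measurable_iff_comap_le.2 <| le_sup_of_le_left le_sup_left

theorem measurable_V_seminalFiltration (n : ℕ) : Measurable[seminalFiltration U E Γ V n] V :=
  measurable_iff_comap_le.2 <| le_sup_of_le_left le_sup_right

theorem measurable_U_seminalFiltration {i n : ℕ} (h : i < n) :
    Measurable[seminalFiltration U E Γ V n] (U i) :=
  measurable_iff_comap_le.2 <| le_sup_of_le_right <| le_iSup₂_of_le i h le_sup_left

theorem measurable_E_seminalFiltration {i n : ℕ} (h : i < n) :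
    Measurable[seminalFiltration U E Γ V n] (E i) :=
  measurable_iff_comap_le.2 <| le_sup_of_le_right <| le_iSup₂_of_le i h le_sup_right

theorem seminalFiltration_mono : Monotone (seminalFiltration U E Γ V) := fun _ _ hmn =>
  sup_le_sup_left (biSup_mono fun _ hi => hi.trans_le hmn) _

def seminalFamily (U E : ℕ → Ω → ℝ) (Γ V : Ω → ℝ) : ℕ ⊕ ℕ ⊕ Bool → Ω → ℝ :=
  Sum.elim U (Sum.elim E fun b : Bool => bif b then Γ else V)

theorem seminalFiltration_le_iSup {n : ℕ} {s : Set (ℕ ⊕ ℕ ⊕ Bool)}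
    (hU : ∀ i < n, Sum.inl i ∈ s) (hE : ∀ i < n, Sum.inr (Sum.inl i) ∈ s)
    (hΓ : Sum.inr (Sum.inr true) ∈ s) (hV : Sum.inr (Sum.inr false) ∈ s) :
    seminalFiltration U E Γ V n ≤
      ⨆ j ∈ s, MeasurableSpace.comap (seminalFamily U E Γ V j) inferInstance :=
  sup_le (sup_le (le_iSup₂_of_le _ hΓ le_rfl) (le_iSup₂_of_le _ hV le_rfl))
    (iSup₂_le fun i hi => sup_le (le_iSup₂_of_le _ (hU i hi) le_rfl)
      (le_iSup₂_of_le _ (hE i hi) le_rfl))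

end SeminalFiltration

structure IsSeminalCurve {Ω : Type*} [MeasurableSpace Ω] (μ : Measure Ω) (U E : ℕ → Ω → ℝ)
    (Γ V : Ω → ℝ) (Y S : ℕ → Ω → ℝ) : Prop where
  measurable_U : ∀ n, Measurable (U n)
  measurable_E : ∀ n, Measurable (E n)
  measurable_Γ : Measurable Γ
  measurable_V : Measurable V
  map_U : ∀ n, μ.map (U n) = volume.restrict (Icc 0 1)
  map_V : μ.map V = volume.restrict (Icc 0 1)
  map_E : ∀ n, μ.map (E n) = expMeasure 1
  tail_Γ : ∀ γ : ℝ, 0 ≤ γ → μ {ω | Γ ω > γ} = ENNReal.ofReal (exp (-(γ ^ 2) / 4))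
  indep : iIndepFun (seminalFamily U E Γ V) μ
  S_zero : ∀ ω, S 0 ω = 1
  Y_zero : ∀ ω, Y 0 ω = (1 - V ω) * Γ ω
  Y_succ : ∀ n ω, Y (n + 1) ω = Y n ω * (1 - √(U n ω))
  S_succ : ∀ n ω, 1 / S (n + 1) ω = 1 / S n ω + 4 / Y n ω ^ 2 * E n ω

namespace IsSeminalCurve

variable {Ω : Type*} [MeasurableSpace Ω] {μ : Measure Ω} {U E : ℕ → Ω → ℝ} {Γ V : Ω → ℝ}
  {Y S : ℕ → Ω → ℝ}

theorem Y_succ_eq_mul (h : IsSeminalCurve μ U E Γ V Y S) (n : ℕ) :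
    Y (n + 1) = Y n * fun ω => 1 - √(U n ω) :=
  funext (h.Y_succ n)

theorem measurable_Y (h : IsSeminalCurve μ U E Γ V Y S) (n : ℕ) :
    Measurable[seminalFiltration U E Γ V n] (Y n) := by
  induction n with
  | zero =>
    rw [show Y 0 = fun ω => (1 - V ω) * Γ ω from funext h.Y_zero]
    exact (measurable_const.sub (measurable_V_seminalFiltration 0)).mul
      (measurable_Γ_seminalFiltration 0)
  | succ n ih =>
    rw [h.Y_succ_eq_mul n]
    exact (ih.mono (seminalFiltration_mono n.le_succ) le_rfl).mul (measurable_const.sub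
      (continuous_sqrt.measurable.comp (measurable_U_seminalFiltration n.lt_succ_self)))

theorem measurable_S (h : IsSeminalCurve μ U E Γ V Y S) (n : ℕ) :
    Measurable[seminalFiltration U E Γ V n] (S n) := by
  induction n with
  | zero =>
    rw [show S 0 = fun _ => 1 from funext h.S_zero]
    exact measurable_const
  | succ n ih =>
    have hS : S (n + 1) = fun ω => (1 / S n ω + 4 / Y n ω ^ 2 * E n ω)⁻¹ :=
      funext fun ω => by rw [← h.S_succ, one_div, inv_inv]
    have hmono := seminalFiltration_mono (U := U) (E := E) (Γ := Γ) (V := V) n.le_succ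
    rw [hS]
    exact ((measurable_const.div (ih.mono hmono le_rfl)).add
      ((measurable_const.div (((h.measurable_Y n).mono hmono le_rfl).pow_const 2)).mul
        (measurable_E_seminalFiltration n.lt_succ_self))).inv

theorem measurable_seminalFamily (h : IsSeminalCurve μ U E Γ V Y S) :
    ∀ j, Measurable (seminalFamily U E Γ V j)
  | .inl n => h.measurable_U n
  | .inr (.inl n) => h.measurable_E n
  | .inr (.inr true) => h.measurable_Γ
  | .inr (.inr false) => h.measurable_V

theorem indepFun_U_Y_S_E (h : IsSeminalCurve μ U E Γ V Y S) (n : ℕ) :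
    IndepFun (U n) (fun ω => (Y n ω, S n ω, E n ω)) μ := by
  refine h.indep.indepFun_of_measurable_iSup_compl (i := Sum.inl n) h.measurable_seminalFamily ?_
  have hF : seminalFiltration U E Γ V n ≤ ⨆ j ∈ ({Sum.inl n}ᶜ : Set (ℕ ⊕ ℕ ⊕ Bool)),
      MeasurableSpace.comap (seminalFamily U E Γ V j) inferInstance :=
    seminalFiltration_le_iSup (fun i hi => by simpa using hi.ne) (by simp) (by simp) (by simp)
  have hE : Measurable[⨆ j ∈ ({Sum.inl n}ᶜ : Set (ℕ ⊕ ℕ ⊕ Bool)),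
      MeasurableSpace.comap (seminalFamily U E Γ V j) inferInstance] (E n) :=
    measurable_iff_comap_le.2 (le_iSup₂_of_le (Sum.inr (Sum.inl n)) (by simp) le_rfl)
  exact ((h.measurable_Y n).mono hF le_rfl).prodMk
    (((h.measurable_S n).mono hF le_rfl).prodMk hE)

theorem indepFun_E_Y (h : IsSeminalCurve μ U E Γ V Y S) (n : ℕ) : IndepFun (E n) (Y n) μ :=
  h.indep.indepFun_of_measurable_iSup_compl (i := Sum.inr (Sum.inl n))
    h.measurable_seminalFamily ((h.measurable_Y n).mono (seminalFiltration_le_iSup (by simp)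
      (fun i hi => by simpa using hi.ne) (by simp) (by simp)) le_rfl)

theorem indepFun_Y_U (h : IsSeminalCurve μ U E Γ V Y S) (n : ℕ) :
    IndepFun (Y n) (fun ω => 1 - √(U n ω)) μ :=
  ((h.indepFun_U_Y_S_E n).comp (measurable_const.sub continuous_sqrt.measurable)
    measurable_fst).symm

theorem indepFun_U_cube (h : IsSeminalCurve μ U E Γ V Y S) (n : ℕ) :
    IndepFun (fun ω => (1 - √(U n ω)) ^ 3)
      (fun ω => Y n ω ^ 3 / S n ω + 4 * (Y n ω * E n ω)) μ :=
  (h.indepFun_U_Y_S_E n).comp (φ := fun u => (1 - √u) ^ 3)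
    (ψ := fun p : ℝ × ℝ × ℝ => p.1 ^ 3 / p.2.1 + 4 * (p.1 * p.2.2)) (by fun_prop) (by fun_prop)

theorem cube_div_succ_eq (h : IsSeminalCurve μ U E Γ V Y S) (n : ℕ) :
    (fun ω => Y (n + 1) ω ^ 3 / S (n + 1) ω) =
      (fun ω => (1 - √(U n ω)) ^ 3) * fun ω => Y n ω ^ 3 / S n ω + 4 * (Y n ω * E n ω) :=
  funext fun ω => by
    rw [h.Y_succ]
    exact mul_pow_three_div_of_one_div_eq (h.S_succ n ω)

theorem ae_nonneg_Γ [IsProbabilityMeasure μ] (h : IsSeminalCurve μ U E Γ V Y S) :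
    ∀ᵐ ω ∂μ, 0 ≤ Γ ω := by
  have hpos : μ {ω | 0 < Γ ω} = μ univ := by simpa using h.tail_Γ 0 le_rfl
  exact ((ae_iff_measure_eq (h.measurable_Γ measurableSet_Ioi).nullMeasurableSet).2 hpos).mono
    fun _ (hω : 0 < _) => hω.le

theorem ae_nonneg_Y_zero_le_Γ [IsProbabilityMeasure μ] (h : IsSeminalCurve μ U E Γ V Y S) :
    ∀ᵐ ω ∂μ, 0 ≤ Y 0 ω ∧ Y 0 ω ≤ Γ ω := by
  filter_upwards [h.ae_nonneg_Γ, ae_mem_Icc_of_map_eq_uniform h.measurable_V.aemeasurable h.map_V]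
    with ω hΓ hV
  rw [h.Y_zero]
  exact ⟨mul_nonneg (by linarith [hV.2]) hΓ, by nlinarith [hV.1]⟩

theorem integrable_Y_zero_pow [IsProbabilityMeasure μ] (h : IsSeminalCurve μ U E Γ V Y S)
    (k : ℕ) : Integrable (fun ω => Y 0 ω ^ k) μ := by
  rcases k.eq_zero_or_pos with rfl | hk
  · simp
  have hΓ : Integrable (fun ω => Γ ω ^ (k : ℝ)) μ :=
    integrable_rpow_of_meas_lt_le_exp_neg_mul_sq h.ae_nonneg_Γ h.measurable_Γ.aemeasurable
      (c := 1 / 4) (by norm_num) (fun t ht => (h.tail_Γ t ht.le).trans_le (by ring_nf; rfl))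
      (by positivity)
  simp only [rpow_natCast] at hΓ
  have hY : Measurable (Y 0) := by
    rw [show Y 0 = fun ω => (1 - V ω) * Γ ω from funext h.Y_zero]
    exact (measurable_const.sub h.measurable_V).mul h.measurable_Γ
  refine hΓ.mono' (hY.pow_const k).aestronglyMeasurable ?_
  filter_upwards [h.ae_nonneg_Y_zero_le_Γ] with ω hω
  rw [norm_pow, Real.norm_eq_abs, abs_of_nonneg hω.1]
  exact pow_le_pow_left₀ hω.1 hω.2 k

theorem integrable_E (h : IsSeminalCurve μ U E Γ V Y S) (n : ℕ) : Integrable (E n) μ := by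
  have hid := integrable_id_expMeasure one_pos
  rw [← h.map_E n] at hid
  exact hid.comp_aemeasurable (h.measurable_E n).aemeasurable

theorem integral_E (h : IsSeminalCurve μ U E Γ V Y S) (n : ℕ) : ∫ ω, E n ω ∂μ = 1 := by
  rw [← integral_map (f := fun x : ℝ => x) (h.measurable_E n).aemeasurable
    aestronglyMeasurable_id, h.map_E n, integral_id_expMeasure one_pos, div_one]

theorem integrable_one_sub_sqrt_U_pow (h : IsSeminalCurve μ U E Γ V Y S) (n k : ℕ) :
    Integrable (fun ω => (1 - √(U n ω)) ^ k) μ :=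
  integrable_one_sub_sqrt_pow_of_map_eq_uniform (h.measurable_U n).aemeasurable (h.map_U n) k

theorem integral_one_sub_sqrt_U_pow (h : IsSeminalCurve μ U E Γ V Y S) (n k : ℕ) :
    ∫ ω, (1 - √(U n ω)) ^ k ∂μ = 2 / ((k + 1) * (k + 2)) :=
  integral_one_sub_sqrt_pow_of_map_eq_uniform (h.measurable_U n).aemeasurable (h.map_U n) k

theorem integrable_one_sub_sqrt_U (h : IsSeminalCurve μ U E Γ V Y S) (n : ℕ) :
    Integrable (fun ω => 1 - √(U n ω)) μ := by
  simpa using h.integrable_one_sub_sqrt_U_pow n 1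

theorem integrable_Y [IsProbabilityMeasure μ] (h : IsSeminalCurve μ U E Γ V Y S) (n : ℕ) :
    Integrable (Y n) μ := by
  induction n with
  | zero => simpa using h.integrable_Y_zero_pow 1
  | succ n ih =>
    rw [h.Y_succ_eq_mul n]
    exact (h.indepFun_Y_U n).integrable_mul ih (h.integrable_one_sub_sqrt_U n)

theorem integral_Y_succ [IsProbabilityMeasure μ] (h : IsSeminalCurve μ U E Γ V Y S) (n : ℕ) :
    ∫ ω, Y (n + 1) ω ∂μ = (∫ ω, Y n ω ∂μ) / 3 := by
  have hU := h.integral_one_sub_sqrt_U_pow n 1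
  norm_num at hU
  rw [h.Y_succ_eq_mul n,
    (h.indepFun_Y_U n).integral_mul_eq_mul_integral (h.integrable_Y n).aestronglyMeasurable
      (h.integrable_one_sub_sqrt_U n).aestronglyMeasurable, hU]
  ring

theorem integrable_Y_mul_E [IsProbabilityMeasure μ] (h : IsSeminalCurve μ U E Γ V Y S) (n : ℕ) :
    Integrable (fun ω => Y n ω * E n ω) μ :=
  (h.indepFun_E_Y n).symm.integrable_mul (h.integrable_Y n) (h.integrable_E n)

theorem integral_Y_mul_E [IsProbabilityMeasure μ] (h : IsSeminalCurve μ U E Γ V Y S) (n : ℕ) :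
    ∫ ω, Y n ω * E n ω ∂μ = ∫ ω, Y n ω ∂μ := by
  simpa [h.integral_E n] using (h.indepFun_E_Y n).symm.integral_mul_eq_mul_integral
    (h.integrable_Y n).aestronglyMeasurable (h.integrable_E n).aestronglyMeasurable

theorem integrable_cube_div [IsProbabilityMeasure μ] (h : IsSeminalCurve μ U E Γ V Y S)
    (n : ℕ) : Integrable (fun ω => Y n ω ^ 3 / S n ω) μ := by
  induction n with
  | zero => simpa [h.S_zero] using h.integrable_Y_zero_pow 3
  | succ n ih =>
    rw [h.cube_div_succ_eq n]
    exact (h.indepFun_U_cube n).integrable_mul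
      (h.integrable_one_sub_sqrt_U_pow n 3) (ih.add ((h.integrable_Y_mul_E n).const_mul 4))

theorem integral_cube_div_succ [IsProbabilityMeasure μ] (h : IsSeminalCurve μ U E Γ V Y S)
    (n : ℕ) : ∫ ω, Y (n + 1) ω ^ 3 / S (n + 1) ω ∂μ
      = (∫ ω, Y n ω ^ 3 / S n ω ∂μ + 4 * ∫ ω, Y n ω ∂μ) / 10 := by
  have hW := (h.integrable_cube_div n).add ((h.integrable_Y_mul_E n).const_mul 4)
  rw [h.cube_div_succ_eq n, (h.indepFun_U_cube n).integral_mul_eq_mul_integral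
    (h.integrable_one_sub_sqrt_U_pow n 3).aestronglyMeasurable hW.aestronglyMeasurable,
    h.integral_one_sub_sqrt_U_pow n 3,
    integral_add (h.integrable_cube_div n) ((h.integrable_Y_mul_E n).const_mul 4),
    integral_const_mul, h.integral_Y_mul_E n]
  norm_num
  ring

end IsSeminalCurve

theorem seminal_curve_cube_moment_bound_general
    {Ω : Type*} [MeasurableSpace Ω] (μ : Measure Ω) [IsProbabilityMeasure μ]
    -- the driving random variables: `U n`, `E n` represent the mathematical
    -- `U_{n+1}`, `E_{n+1}` (indexing shifted by one)
    (U E : ℕ → Ω → ℝ) (Γ V : Ω → ℝ) (Y S : ℕ → Ω → ℝ)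
    (hUm : ∀ n, Measurable (U n)) (hEm : ∀ n, Measurable (E n))
    (hΓm : Measurable Γ) (hVm : Measurable V)
    -- each `U n` and `V` is uniformly distributed on `[0,1]`
    (hU : ∀ n, μ.map (U n) = volume.restrict (Set.Icc (0:ℝ) 1))
    (hV : μ.map V = volume.restrict (Set.Icc (0:ℝ) 1))
    -- each `E n` has the standard exponential distribution (rate 1)
    (hE : ∀ n, μ.map (E n) = expMeasure 1)
    -- `Γ` has the Rayleigh(√2) distribution: `P(Γ > γ) = exp (-γ²/4)` for `γ ≥ 0`
    (hΓ : ∀ γ : ℝ, 0 ≤ γ → μ {ω | Γ ω > γ} = ENNReal.ofReal (Real.exp (-(γ ^ 2) / 4)))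
    -- `(U n)`, `(E n)`, `Γ`, `V` are mutually independent
    (hindep : iIndepFun
      (Sum.elim U (Sum.elim E (fun b : Bool => bif b then Γ else V))) μ)
    -- initial conditions `S 0 = 1`, `Y 0 = (1 - V)·Γ`, `G 0 = V·Γ`
    (hS0 : ∀ ω, S 0 ω = 1)
    (hY0 : ∀ ω, Y 0 ω = (1 - V ω) * Γ ω)
    -- the seminal-curve recursion
    (hYrec : ∀ n ω, Y (n + 1) ω = Y n ω * (1 - Real.sqrt (U n ω)))
    (hSrec : ∀ n ω, 1 / S (n + 1) ω = 1 / S n ω + 4 / (Y n ω) ^ 2 * E n ω)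
    :
    (∀ n : ℕ,
      ∫ ω, (3:ℝ) ^ n * (Y n ω) ^ 3 / S n ω ∂μ
        ≤ ((3:ℝ) / 10) ^ n * ∫ ω, (Y 0 ω) ^ 3 ∂μ + 12 / 7 * ∫ ω, Y 0 ω ∂μ)
    ∧ (∀ n : ℕ,
      ∫ ω, (Y n ω) ^ 3 / S n ω ∂μ
        ≤ (∫ ω, (Y 0 ω) ^ 3 ∂μ + 12 / 7 * ∫ ω, Y 0 ω ∂μ) * (3:ℝ) ^ (-(n:ℤ))) := by
  have h : IsSeminalCurve μ U E Γ V Y S :=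
    ⟨hUm, hEm, hΓm, hVm, hU, hV, hE, hΓ, hindep, hS0, hY0, hYrec, hSrec⟩
  set a₀ := ∫ ω, Y 0 ω ^ 3 ∂μ
  set b₀ := ∫ ω, Y 0 ω ∂μ
  have ha₀ : 0 ≤ a₀ := integral_nonneg_of_ae (h.ae_nonneg_Y_zero_le_Γ.mono fun ω hω => by
    simpa using pow_nonneg hω.1 3)
  have hb₀ : 0 ≤ b₀ := integral_nonneg_of_ae (h.ae_nonneg_Y_zero_le_Γ.mono fun ω hω => hω.1)
  have hbound : ∀ n, 3 ^ n * ∫ ω, Y n ω ^ 3 / S n ω ∂μ ≤ (3 / 10) ^ n * a₀ + 12 / 7 * b₀ := by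
    intro n
    have hrec := pow_mul_eq_of_recursion (a := fun n => ∫ ω, Y n ω ^ 3 / S n ω ∂μ)
      (b := fun n => ∫ ω, Y n ω ∂μ) h.integral_cube_div_succ h.integral_Y_succ n
    simp only [h.S_zero, div_one] at hrec
    rw [hrec]
    nlinarith [pow_nonneg (by norm_num : (0:ℝ) ≤ 3 / 10) n]
  refine ⟨fun n => ?_, fun n => ?_⟩
  · simpa only [mul_div_assoc, integral_const_mul] using hbound n
  · rw [zpow_neg, zpow_natCast, ← div_eq_mul_inv, le_div_iff₀ (by positivity), mul_comm]
    calc 3 ^ n * ∫ ω, Y n ω ^ 3 / S n ω ∂μ ≤ (3 / 10) ^ n * a₀ + 12 / 7 * b₀ := hbound n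
      _ ≤ a₀ + 12 / 7 * b₀ := by
        gcongr
        exact mul_le_of_le_one_left ha₀ (pow_le_one₀ (by norm_num) (by norm_num))

theorem seminal_curve_cube_moment_bound
    {Ω : Type*} [MeasurableSpace Ω] (μ : Measure Ω) [IsProbabilityMeasure μ]
    -- the driving random variables: `U n`, `E n` represent the mathematical
    -- `U_{n+1}`, `E_{n+1}` (indexing shifted by one)
    (U E : ℕ → Ω → ℝ) (Γ V : Ω → ℝ) (Y S G : ℕ → Ω → ℝ)
    (hUm : ∀ n, Measurable (U n)) (hEm : ∀ n, Measurable (E n))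
    (hΓm : Measurable Γ) (hVm : Measurable V)
    -- each `U n` and `V` is uniformly distributed on `[0,1]`
    (hU : ∀ n, μ.map (U n) = volume.restrict (Set.Icc (0:ℝ) 1))
    (hV : μ.map V = volume.restrict (Set.Icc (0:ℝ) 1))
    -- each `E n` has the standard exponential distribution (rate 1)
    (hE : ∀ n, μ.map (E n) = expMeasure 1)
    -- `Γ` has the Rayleigh(√2) distribution: `P(Γ > γ) = exp (-γ²/4)` for `γ ≥ 0`
    (hΓ : ∀ γ : ℝ, 0 ≤ γ → μ {ω | Γ ω > γ} = ENNReal.ofReal (Real.exp (-(γ ^ 2) / 4)))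
    -- `(U n)`, `(E n)`, `Γ`, `V` are mutually independent
    (hindep : iIndepFun
      (Sum.elim U (Sum.elim E (fun b : Bool => bif b then Γ else V))) μ)
    -- initial conditions `S 0 = 1`, `Y 0 = (1 - V)·Γ`, `G 0 = V·Γ`
    (hS0 : ∀ ω, S 0 ω = 1)
    (hY0 : ∀ ω, Y 0 ω = (1 - V ω) * Γ ω)
    (hG0 : ∀ ω, G 0 ω = V ω * Γ ω)
    -- the seminal-curve recursion
    (hYrec : ∀ n ω, Y (n + 1) ω = Y n ω * (1 - Real.sqrt (U n ω)))
    (hSrec : ∀ n ω, 1 / S (n + 1) ω = 1 / S n ω + 4 / (Y n ω) ^ 2 * E n ω)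
    (hGrec : ∀ n ω, G (n + 1) ω = G n ω + Y n ω / S (n + 1) ω * Real.sqrt (U n ω))
    :
    (∀ n : ℕ,
      ∫ ω, (3:ℝ) ^ n * (Y n ω) ^ 3 / S n ω ∂μ
        ≤ ((3:ℝ) / 10) ^ n * ∫ ω, (Y 0 ω) ^ 3 ∂μ + 12 / 7 * ∫ ω, Y 0 ω ∂μ)
    ∧ (∀ n : ℕ,
      ∫ ω, (Y n ω) ^ 3 / S n ω ∂μ
        ≤ (∫ ω, (Y 0 ω) ^ 3 ∂μ + 12 / 7 * ∫ ω, Y 0 ω ∂μ) * (3:ℝ) ^ (-(n:ℤ))) :=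
  seminal_curve_cube_moment_bound_general μ U E Γ V Y S hUm hEm hΓm hVm hU hV hE hΓ hindep hS0 hY0
    hYrec hSrec
end

section
/- In the seminal-curve recursion, the quantity Y_n³/S_n almost surely converges to zero geometrically fast: for every constant c with 0 ≤ c < 3, one has c^n · Y_n³/S_n → 0 almost surely as n → ∞. -/
/-! With `a k = 1 - √(U k)`, the recursion gives `Y n = Y 0 * ∏_{k<n} a k` and
`Y (n+1)³ / S (n+1) = a n³ * (Y n³ / S n + 4 E n Y n)`; since `0 ≤ a n ≤ 1`, induction yields
`Y n³ / S n ≤ (∏_{k<n} a k) (Y 0³ + 4 Y 0 ∑_{k<n} E k)`. The `a k` are independent with mean `1/3`,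
so the series `∑ₙ cⁿ (n² + 1) ∏_{k<n} a k` has expectation `∑ₙ (n² + 1) (c/3)ⁿ < ∞`; hence it
converges almost surely and its terms tend to `0`. Finally, by Borel–Cantelli `E k ≤ k + 1`
eventually, so `∑_{k<n} E k = O(n²)`. -/

open MeasureTheory ProbabilityTheory Filter

open Finset Topology
open scoped ENNReal

lemma exists_sum_range_le_add_sq {e : ℕ → ℝ} (h : ∀ᶠ k in atTop, e k ≤ k + 1) :
    ∃ C, ∀ᶠ n in atTop, ∑ k ∈ range n, e k ≤ C + (n : ℝ) ^ 2 := by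
  obtain ⟨N, hN⟩ := eventually_atTop.1 h
  refine ⟨∑ k ∈ range N, e k, eventually_atTop.2 ⟨N, fun n hn => ?_⟩⟩
  rw [← sum_range_add_sum_Ico _ hn]
  gcongr
  calc ∑ k ∈ Ico N n, e k ≤ ∑ _k ∈ Ico N n, (n : ℝ) :=
        sum_le_sum fun k hk => (hN k (mem_Ico.1 hk).1).trans (by exact_mod_cast (mem_Ico.1 hk).2)
    _ ≤ (n : ℝ) ^ 2 := by
        rw [sum_const, Nat.card_Ico, nsmul_eq_mul, sq]
        gcongr
        exact_mod_cast Nat.sub_le n N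

lemma tendsto_pow_mul_of_le_prod_mul_sum {z P e : ℕ → ℝ} {A B C c : ℝ} (hc : 0 ≤ c)
    (hA : 0 ≤ A) (hB : 0 ≤ B) (hz0 : ∀ n, 0 ≤ z n)
    (hz : ∀ n, z n ≤ P n * (A + B * ∑ k ∈ range n, e k)) (hP : ∀ n, 0 ≤ P n)
    (he : ∀ᶠ n in atTop, ∑ k ∈ range n, e k ≤ C + (n : ℝ) ^ 2)
    (hlim : Tendsto (fun n : ℕ => c ^ n * ((n : ℝ) ^ 2 + 1) * P n) atTop (𝓝 0)) :
    Tendsto (fun n => c ^ n * z n) atTop (𝓝 0) := by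
  refine squeeze_zero' (Eventually.of_forall fun n => mul_nonneg (pow_nonneg hc n) (hz0 n))
    ?_ (by simpa using hlim.const_mul (A + B * |C| + B))
  filter_upwards [he] with n hn
  have hcP : 0 ≤ c ^ n * P n := mul_nonneg (pow_nonneg hc n) (hP n)
  have hsum : A + B * (C + (n : ℝ) ^ 2) ≤ (A + B * |C| + B) * ((n : ℝ) ^ 2 + 1) := by
    nlinarith [mul_nonneg hA (sq_nonneg (n : ℝ)), mul_nonneg hB (sub_nonneg.2 (le_abs_self C)),
      mul_nonneg (mul_nonneg hB (abs_nonneg C)) (sq_nonneg (n : ℝ))]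
  calc c ^ n * z n ≤ c ^ n * (P n * (A + B * (C + (n : ℝ) ^ 2))) :=
        mul_le_mul_of_nonneg_left ((hz n).trans (mul_le_mul_of_nonneg_left (by gcongr) (hP n)))
          (pow_nonneg hc n)
    _ ≤ c ^ n * P n * ((A + B * |C| + B) * ((n : ℝ) ^ 2 + 1)) := by
        rw [← mul_assoc]; exact mul_le_mul_of_nonneg_left hsum hcP
    _ = (A + B * |C| + B) * (c ^ n * ((n : ℝ) ^ 2 + 1) * P n) := by ring

section Recursion

variable {a e y s : ℕ → ℝ} {κ : ℝ}

lemma eq_mul_prod_range_of_succ (hy : ∀ n, y (n + 1) = y n * a n) (n : ℕ) :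
    y n = y 0 * ∏ k ∈ range n, a k := by
  induction n with
  | zero => simp
  | succ n ih => rw [hy, ih, prod_range_succ, mul_assoc]

lemma pos_of_monotone_one_div (h0 : 0 < s 0) (h : Monotone fun n => 1 / s n) (n : ℕ) :
    0 < s n :=
  one_div_pos.1 ((one_div_pos.2 h0).trans_le (h n.zero_le))

lemma cube_div_succ {n : ℕ} (hy : y (n + 1) = y n * a n)
    (hs : 1 / s (n + 1) = 1 / s n + κ / y n ^ 2 * e n) :
    y (n + 1) ^ 3 / s (n + 1) = a n ^ 3 * (y n ^ 3 / s n + κ * e n * y n) := by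
  rcases eq_or_ne (y n) 0 with hy0 | hy0
  · simp [hy, hy0]
  · rw [div_eq_mul_one_div _ (s (n + 1)), hs, hy]
    field_simp

lemma cube_div_le_prod_mul_sum (ha0 : ∀ k, 0 ≤ a k) (ha1 : ∀ k, a k ≤ 1) (he : ∀ k, 0 ≤ e k)
    (hκ : 0 ≤ κ) (hy0 : 0 ≤ y 0) (hs0 : s 0 = 1) (hy : ∀ n, y (n + 1) = y n * a n)
    (hs : ∀ n, 1 / s (n + 1) = 1 / s n + κ / y n ^ 2 * e n) (n : ℕ) :
    y n ^ 3 / s n ≤ (∏ k ∈ range n, a k) * (y 0 ^ 3 + κ * y 0 * ∑ k ∈ range n, e k) := by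
  induction n with
  | zero => simp [hs0]
  | succ n ih =>
    have hP : 0 ≤ ∏ k ∈ range n, a k := prod_nonneg fun k _ => ha0 k
    have hT : 0 ≤ y 0 ^ 3 + κ * y 0 * ∑ k ∈ range (n + 1), e k := by
      have := sum_nonneg fun k (_ : k ∈ range (n + 1)) => he k
      positivity
    calc y (n + 1) ^ 3 / s (n + 1)
        = a n ^ 3 * (y n ^ 3 / s n + κ * e n * y n) := cube_div_succ (hy n) (hs n)
      _ ≤ a n ^ 3 * ((∏ k ∈ range n, a k) * (y 0 ^ 3 + κ * y 0 * ∑ k ∈ range (n + 1), e k)) := by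
        refine mul_le_mul_of_nonneg_left ?_ (pow_nonneg (ha0 n) 3)
        rw [sum_range_succ]
        linear_combination ih + κ * e n * eq_mul_prod_range_of_succ hy n
      _ ≤ a n * ((∏ k ∈ range n, a k) * (y 0 ^ 3 + κ * y 0 * ∑ k ∈ range (n + 1), e k)) := by
        gcongr
        exact pow_le_of_le_one (ha0 n) (ha1 n) (by norm_num)
      _ = (∏ k ∈ range (n + 1), a k) * (y 0 ^ 3 + κ * y 0 * ∑ k ∈ range (n + 1), e k) := by
        rw [prod_range_succ]; ring

lemma tendsto_pow_mul_cube_div (ha0 : ∀ k, 0 ≤ a k) (ha1 : ∀ k, a k ≤ 1) (he : ∀ k, 0 ≤ e k)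
    (hκ : 0 ≤ κ) (hy0 : 0 ≤ y 0) (hs0 : s 0 = 1) (hy : ∀ n, y (n + 1) = y n * a n)
    (hs : ∀ n, 1 / s (n + 1) = 1 / s n + κ / y n ^ 2 * e n) {c C : ℝ} (hc : 0 ≤ c)
    (hC : ∀ᶠ n in atTop, ∑ k ∈ range n, e k ≤ C + (n : ℝ) ^ 2)
    (hlim : Tendsto (fun n : ℕ => c ^ n * ((n : ℝ) ^ 2 + 1) * ∏ k ∈ range n, a k) atTop (𝓝 0)) :
    Tendsto (fun n => c ^ n * (y n ^ 3 / s n)) atTop (𝓝 0) := by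
  have hP (n : ℕ) : 0 ≤ ∏ k ∈ range n, a k := prod_nonneg fun k _ => ha0 k
  have hs_pos : ∀ n, 0 < s n := pos_of_monotone_one_div (by simp [hs0]) <|
    monotone_nat_of_le_succ fun n => by
      have := he n
      rw [hs, le_add_iff_nonneg_right]
      positivity
  refine tendsto_pow_mul_of_le_prod_mul_sum hc (pow_nonneg hy0 3) (by positivity) (fun n => ?_)
    (cube_div_le_prod_mul_sum ha0 ha1 he hκ hy0 hs0 hy hs) hP hC hlim
  rw [eq_mul_prod_range_of_succ hy n]
  exact div_nonneg (pow_nonneg (mul_nonneg hy0 (hP n)) 3) (hs_pos n).le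

end Recursion

lemma lintegral_one_sub_sqrt_Icc :
    ∫⁻ x in Set.Icc (0 : ℝ) 1, ENNReal.ofReal (1 - √x) = ENNReal.ofReal 3⁻¹ := by
  have hsqrt : ∫ x in (0 : ℝ)..1, √x = 2 / 3 := by
    simp_rw [Real.sqrt_eq_rpow]
    rw [integral_rpow (Or.inl (by norm_num))]
    norm_num
  rw [← ofReal_integral_eq_lintegral_ofReal, integral_Icc_eq_integral_Ioc,
    ← intervalIntegral.integral_of_le zero_le_one, intervalIntegral.integral_sub
      intervalIntegrable_const (Real.continuous_sqrt.intervalIntegrable 0 1), hsqrt]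
  · norm_num
  · exact (continuous_const.sub Real.continuous_sqrt).integrableOn_Icc
  · exact (ae_restrict_iff' measurableSet_Icc).2
      (ae_of_all _ fun x hx => sub_nonneg.2 (Real.sqrt_le_one.2 hx.2))

lemma ae_pos_expMeasure {r : ℝ} (hr : 0 < r) : ∀ᵐ x ∂expMeasure r, 0 < x := by
  have := isProbabilityMeasure_expMeasure hr
  have h : expMeasure r (Set.Iic 0) = 0 := by
    rw [← ofReal_cdf, cdf_expMeasure_eq hr]
    simp
  simpa using measure_eq_zero_iff_ae_notMem.1 h

lemma expMeasure_Ioi {r t : ℝ} (hr : 0 < r) (ht : 0 ≤ t) :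
    expMeasure r (Set.Ioi t) = ENNReal.ofReal (Real.exp (-(r * t))) := by
  have := isProbabilityMeasure_expMeasure hr
  rw [← Set.compl_Iic, prob_compl_eq_one_sub measurableSet_Iic, ← ofReal_cdf,
    cdf_expMeasure_eq hr, if_pos ht, ← ENNReal.ofReal_one,
    ← ENNReal.ofReal_sub _ (sub_nonneg.2 (Real.exp_le_one_iff.2 (by nlinarith))), sub_sub_cancel]

section Probability

variable {Ω : Type*} [MeasurableSpace Ω] {μ : Measure Ω}

lemma ae_mem_Icc_of_map_eq {X : Ω → ℝ} (hX : Measurable X)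
    (h : μ.map X = volume.restrict (Set.Icc 0 1)) : ∀ᵐ ω ∂μ, X ω ∈ Set.Icc (0 : ℝ) 1 :=
  ae_of_ae_map hX.aemeasurable (h ▸ ae_restrict_mem measurableSet_Icc)

lemma ae_eventually_le_succ_of_map_eq_expMeasure {E : ℕ → Ω → ℝ} (hEm : ∀ n, Measurable (E n))
    (hE : ∀ n, μ.map (E n) = expMeasure 1) : ∀ᵐ ω ∂μ, ∀ᶠ n in atTop, E n ω ≤ n + 1 := by
  have htail (n : ℕ) :
      μ {ω | (n : ℝ) + 1 < E n ω} = ENNReal.ofReal (Real.exp (-((n : ℝ) + 1))) := by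
    rw [show {ω | (n : ℝ) + 1 < E n ω} = E n ⁻¹' Set.Ioi ((n : ℝ) + 1) from rfl,
      ← Measure.map_apply (hEm n) measurableSet_Ioi, hE n, expMeasure_Ioi one_pos (by positivity),
      one_mul]
  have hsum : Summable fun n : ℕ => Real.exp (-((n : ℝ) + 1)) := by
    simpa using (summable_nat_add_iff 1).2 Real.summable_exp_neg_nat
  have hfin : ∑' n : ℕ, μ {ω | (n : ℝ) + 1 < E n ω} ≠ ∞ := by
    rw [tsum_congr htail, ← ENNReal.ofReal_tsum_of_nonneg (fun _ => (Real.exp_pos _).le) hsum]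
    exact ENNReal.ofReal_ne_top
  filter_upwards [ae_eventually_notMem hfin] with ω hω
  exact hω.mono fun n hn => not_lt.1 hn

lemma ae_tendsto_zero_of_tsum_lintegral_ne_top {X : ℕ → Ω → ℝ≥0∞}
    (hX : ∀ n, AEMeasurable (X n) μ) (h : ∑' n, ∫⁻ ω, X n ω ∂μ ≠ ∞) :
    ∀ᵐ ω ∂μ, Tendsto (fun n => X n ω) atTop (𝓝 0) := by
  rw [← lintegral_tsum hX] at h
  filter_upwards [ae_lt_top' (AEMeasurable.tsum hX) h] with ω hω
  exact ENNReal.tendsto_atTop_zero_of_tsum_ne_top hω.ne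

lemma ae_tendsto_mul_prod_of_iIndepFun {g : ℕ → Ω → ℝ≥0∞} (hgm : ∀ k, Measurable (g k))
    (hind : iIndepFun g μ) {m : ℝ≥0∞} (hg : ∀ k, ∫⁻ ω, g k ω ∂μ = m) {w : ℕ → ℝ≥0∞}
    (hw : ∑' n, w n * m ^ n ≠ ∞) :
    ∀ᵐ ω ∂μ, Tendsto (fun n => w n * ∏ k ∈ range n, g k ω) atTop (𝓝 0) := by
  refine ae_tendsto_zero_of_tsum_lintegral_ne_top
    (fun n => ((measurable_prod _ fun k _ => hgm k).const_mul _).aemeasurable) ?_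
  simpa [lintegral_const_mul _ (measurable_prod _ fun k _ => hgm k),
    lintegral_prod_eq_prod_lintegral_of_indepFun _ _ hind hgm, hg] using hw

lemma ae_tendsto_pow_mul_prod_one_sub_sqrt {U : ℕ → Ω → ℝ} (hUm : ∀ n, Measurable (U n))
    (hU : ∀ n, μ.map (U n) = volume.restrict (Set.Icc 0 1)) (hind : iIndepFun U μ) {c : ℝ}
    (hc0 : 0 ≤ c) (hc3 : c < 3) :
    ∀ᵐ ω ∂μ, Tendsto (fun n : ℕ => c ^ n * ((n : ℝ) ^ 2 + 1) * ∏ k ∈ range n, (1 - √(U k ω)))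
      atTop (𝓝 0) := by
  have hfac (k : ℕ) : ∀ᵐ ω ∂μ, 0 ≤ 1 - √(U k ω) :=
    (ae_mem_Icc_of_map_eq (hUm k) (hU k)).mono fun ω h => sub_nonneg.2 (Real.sqrt_le_one.2 h.2)
  have hφ : Measurable fun x : ℝ => ENNReal.ofReal (1 - √x) :=
    (measurable_const.sub measurable_id.sqrt).ennreal_ofReal
  have hg (k : ℕ) : ∫⁻ ω, ENNReal.ofReal (1 - √(U k ω)) ∂μ = ENNReal.ofReal 3⁻¹ := by
    rw [← lintegral_one_sub_sqrt_Icc, ← hU k, lintegral_map hφ (hUm k)]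
  have hw : ∑' n : ℕ, ENNReal.ofReal (c ^ n * ((n : ℝ) ^ 2 + 1)) * ENNReal.ofReal 3⁻¹ ^ n ≠ ∞ := by
    have hq0 : 0 ≤ c / 3 := by positivity
    have hsum : Summable fun n : ℕ => (n : ℝ) ^ 2 * (c / 3) ^ n + (c / 3) ^ n :=
      (summable_pow_mul_geometric_of_norm_lt_one 2 (by rw [Real.norm_of_nonneg hq0]; linarith)).add
        (summable_geometric_of_lt_one hq0 (by linarith))
    have hterm (n : ℕ) : ENNReal.ofReal (c ^ n * ((n : ℝ) ^ 2 + 1)) * ENNReal.ofReal 3⁻¹ ^ n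
        = ENNReal.ofReal ((n : ℝ) ^ 2 * (c / 3) ^ n + (c / 3) ^ n) := by
      rw [← ENNReal.ofReal_pow (by norm_num), ← ENNReal.ofReal_mul (by positivity)]
      congr 1
      ring
    rw [tsum_congr hterm, ← ENNReal.ofReal_tsum_of_nonneg (fun n => by positivity) hsum]
    exact ENNReal.ofReal_ne_top
  filter_upwards [ae_tendsto_mul_prod_of_iIndepFun (fun k => hφ.comp (hUm k))
    (hind.comp _ fun _ => hφ) hg hw, ae_all_iff.2 hfac] with ω hω hω0
  refine (by simpa using (ENNReal.tendsto_toReal ENNReal.zero_ne_top).comp hω : Tendsto _ _ _).congr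
    fun n => ?_
  have hcn : 0 ≤ c ^ n * ((n : ℝ) ^ 2 + 1) := by positivity
  simp [ENNReal.toReal_prod, ENNReal.toReal_ofReal hcn, hω0]

end Probability

theorem seminal_curve_cube_ratio_decay_general
    {Ω : Type*} [MeasurableSpace Ω] (μ : Measure Ω) [IsProbabilityMeasure μ]
    -- the driving random variables: `U n`, `E n` represent the mathematical
    -- `U_{n+1}`, `E_{n+1}` (indexing shifted by one)
    (U E : ℕ → Ω → ℝ) (Γ V : Ω → ℝ) (Y S : ℕ → Ω → ℝ)
    (hUm : ∀ n, Measurable (U n)) (hEm : ∀ n, Measurable (E n))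
    (hΓm : Measurable Γ) (hVm : Measurable V)
    -- each `U n` and `V` is uniformly distributed on `[0,1]`
    (hU : ∀ n, μ.map (U n) = volume.restrict (Set.Icc (0:ℝ) 1))
    (hV : μ.map V = volume.restrict (Set.Icc (0:ℝ) 1))
    -- each `E n` has the standard exponential distribution (rate 1)
    (hE : ∀ n, μ.map (E n) = expMeasure 1)
    -- `Γ` has the Rayleigh(√2) distribution: `P(Γ > γ) = exp (-γ²/4)` for `γ ≥ 0`
    (hΓ : ∀ γ : ℝ, 0 ≤ γ → μ {ω | Γ ω > γ} = ENNReal.ofReal (Real.exp (-(γ ^ 2) / 4)))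
    -- `(U n)`, `(E n)`, `Γ`, `V` are mutually independent
    (hindep : iIndepFun
      (Sum.elim U (Sum.elim E (fun b : Bool => bif b then Γ else V))) μ)
    -- initial conditions `S 0 = 1`, `Y 0 = (1 - V)·Γ`, `G 0 = V·Γ`
    (hS0 : ∀ ω, S 0 ω = 1)
    (hY0 : ∀ ω, Y 0 ω = (1 - V ω) * Γ ω)
    -- the seminal-curve recursion
    (hYrec : ∀ n ω, Y (n + 1) ω = Y n ω * (1 - Real.sqrt (U n ω)))
    (hSrec : ∀ n ω, 1 / S (n + 1) ω = 1 / S n ω + 4 / (Y n ω) ^ 2 * E n ω)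
    :
    ∀ c : ℝ, 0 ≤ c → c < 3 →
      ∀ᵐ ω ∂μ, Tendsto (fun n => c ^ n * (Y n ω) ^ 3 / S n ω) atTop (nhds 0) := by
  intro c hc0 hc3
  have hΓpos : ∀ᵐ ω ∂μ, 0 < Γ ω := by
    rw [ae_iff_measure_eq (measurableSet_lt measurable_const hΓm).nullMeasurableSet]
    simpa using hΓ 0 le_rfl
  filter_upwards [ae_all_iff.2 fun k => ae_mem_Icc_of_map_eq (hUm k) (hU k),
    ae_all_iff.2 fun k => ae_of_ae_map (hEm k).aemeasurable (hE k ▸ ae_pos_expMeasure one_pos),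
    ae_mem_Icc_of_map_eq hVm hV, hΓpos, ae_eventually_le_succ_of_map_eq_expMeasure hEm hE,
    ae_tendsto_pow_mul_prod_one_sub_sqrt hUm hU
      (hindep.precomp (g := Sum.inl) Sum.inl_injective) hc0 hc3]
    with ω hUω hEω hVω hΓω hEgrowth hlim
  obtain ⟨C, hC⟩ := exists_sum_range_le_add_sq hEgrowth
  simp_rw [mul_div_assoc]
  exact tendsto_pow_mul_cube_div (fun k => sub_nonneg.2 (Real.sqrt_le_one.2 (hUω k).2))
    (fun k => sub_le_self _ (Real.sqrt_nonneg _)) (fun k => (hEω k).le) (by norm_num)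
    (hY0 ω ▸ mul_nonneg (sub_nonneg.2 hVω.2) hΓω.le) (hS0 ω) (fun n => hYrec n ω)
    (fun n => hSrec n ω) hc0 hC hlim

theorem seminal_curve_cube_ratio_decay
    {Ω : Type*} [MeasurableSpace Ω] (μ : Measure Ω) [IsProbabilityMeasure μ]
    -- the driving random variables: `U n`, `E n` represent the mathematical
    -- `U_{n+1}`, `E_{n+1}` (indexing shifted by one)
    (U E : ℕ → Ω → ℝ) (Γ V : Ω → ℝ) (Y S G : ℕ → Ω → ℝ)
    (hUm : ∀ n, Measurable (U n)) (hEm : ∀ n, Measurable (E n))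
    (hΓm : Measurable Γ) (hVm : Measurable V)
    -- each `U n` and `V` is uniformly distributed on `[0,1]`
    (hU : ∀ n, μ.map (U n) = volume.restrict (Set.Icc (0:ℝ) 1))
    (hV : μ.map V = volume.restrict (Set.Icc (0:ℝ) 1))
    -- each `E n` has the standard exponential distribution (rate 1)
    (hE : ∀ n, μ.map (E n) = expMeasure 1)
    -- `Γ` has the Rayleigh(√2) distribution: `P(Γ > γ) = exp (-γ²/4)` for `γ ≥ 0`
    (hΓ : ∀ γ : ℝ, 0 ≤ γ → μ {ω | Γ ω > γ} = ENNReal.ofReal (Real.exp (-(γ ^ 2) / 4)))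
    -- `(U n)`, `(E n)`, `Γ`, `V` are mutually independent
    (hindep : iIndepFun
      (Sum.elim U (Sum.elim E (fun b : Bool => bif b then Γ else V))) μ)
    -- initial conditions `S 0 = 1`, `Y 0 = (1 - V)·Γ`, `G 0 = V·Γ`
    (hS0 : ∀ ω, S 0 ω = 1)
    (hY0 : ∀ ω, Y 0 ω = (1 - V ω) * Γ ω)
    (hG0 : ∀ ω, G 0 ω = V ω * Γ ω)
    -- the seminal-curve recursion
    (hYrec : ∀ n ω, Y (n + 1) ω = Y n ω * (1 - Real.sqrt (U n ω)))
    (hSrec : ∀ n ω, 1 / S (n + 1) ω = 1 / S n ω + 4 / (Y n ω) ^ 2 * E n ω)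
    (hGrec : ∀ n ω, G (n + 1) ω = G n ω + Y n ω / S (n + 1) ω * Real.sqrt (U n ω))
    :
    ∀ c : ℝ, 0 ≤ c → c < 3 →
      ∀ᵐ ω ∂μ, Tendsto (fun n => c ^ n * (Y n ω) ^ 3 / S n ω) atTop (nhds 0) :=
  seminal_curve_cube_ratio_decay_general μ U E Γ V Y S hUm hEm hΓm hVm hU hV hE hΓ hindep hS0 hY0
    hYrec hSrec
end

section
/- In the seminal-curve recursion, for every N ≥ 1 one has E[Y_N/G_N] ≤ 3^{−(N−1)}. -/
/-!
Since `1 / S_n` increases from `1`, `S_n ≤ 1`; as the increments of `G` are nonnegative,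
`G_N ≥ G_1 ≥ Y_0 √U_1`, while `Y_N = Y_0 ∏_{k ≤ N} (1 - √U_k)`. Hence
`Y_N / G_N ≤ ((1 - √U_1) / √U_1) ∏_{2 ≤ k ≤ N} (1 - √U_k)`,
a product of independent factors with means `1` and `1/3`.
-/

open MeasureTheory ProbabilityTheory Filter

open Finset

namespace ProbabilityTheory

variable {Ω ι : Type*} [MeasurableSpace Ω] {μ : Measure Ω} {X : ι → Ω → ℝ}

theorem iIndepFun.integrable_finsetProd (hX : iIndepFun X μ) (hXm : ∀ i, Measurable (X i))
    (hint : ∀ i, Integrable (X i) μ) (s : Finset ι) :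
    Integrable (fun ω ↦ ∏ i ∈ s, X i ω) μ := by
  classical
  induction s using Finset.induction_on with
  | empty => have := hX.isProbabilityMeasure; simp
  | insert i s hi ih =>
    have h := (hX.indepFun_finsetProd_of_notMem hXm hi).integrable_mul
      (by rwa [prod_fn]) (hint i)
    simp_rw [prod_insert hi, mul_comm (X i _)]
    rwa [prod_fn] at h

theorem iIndepFun.integral_finsetProd (hX : iIndepFun X μ) (hXm : ∀ i, Measurable (X i))
    (s : Finset ι) : ∫ ω, ∏ i ∈ s, X i ω ∂μ = ∏ i ∈ s, ∫ ω, X i ω ∂μ := by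
  classical
  induction s using Finset.induction_on with
  | empty => have := hX.isProbabilityMeasure; simp
  | insert i s hi ih =>
    have h := (hX.indepFun_finsetProd_of_notMem hXm hi).integral_mul_eq_mul_integral
      (s.aestronglyMeasurable_prod fun j _ ↦ (hXm j).aestronglyMeasurable)
      (hXm i).aestronglyMeasurable
    rw [prod_fn] at h
    simp_rw [prod_insert hi, mul_comm (X i _), mul_comm (∫ ω, X i ω ∂μ), ← ih]
    exact h

theorem ae_nonneg_gammaMeasure (a r : ℝ) : ∀ᵐ x ∂gammaMeasure a r, 0 ≤ x := by
  refine (ae_withDensity_iff' (by unfold gammaPDF; fun_prop)).2 (ae_of_all _ fun x hx ↦ ?_)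
  by_contra h
  exact hx (gammaPDF_of_neg (not_le.1 h))

end ProbabilityTheory

section Law

variable {Ω α : Type*} [MeasurableSpace Ω] [MeasurableSpace α] {μ : Measure Ω} {X : Ω → α}

theorem ae_mem_of_map_eq_restrict {ν : Measure α} {s : Set α} (hX : AEMeasurable X μ)
    (hs : MeasurableSet s) (h : μ.map X = ν.restrict s) : ∀ᵐ ω ∂μ, X ω ∈ s :=
  ae_of_ae_map hX (h ▸ ae_restrict_mem hs)

variable {X : Ω → ℝ} {f : ℝ → ℝ}

theorem ae_mem_Ioc_of_map_eq_uniform (hX : AEMeasurable X μ)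
    (hlaw : μ.map X = volume.restrict (Set.Icc 0 1)) : ∀ᵐ ω ∂μ, X ω ∈ Set.Ioc 0 1 :=
  ae_mem_of_map_eq_restrict hX measurableSet_Ioc
    (hlaw.trans (Measure.restrict_congr_set Ioc_ae_eq_Icc).symm)

theorem integrable_comp_of_map_eq_uniform (hX : AEMeasurable X μ)
    (hlaw : μ.map X = volume.restrict (Set.Icc 0 1)) (hf : IntervalIntegrable f volume 0 1) :
    Integrable (fun ω ↦ f (X ω)) μ := by
  rw [intervalIntegrable_iff_integrableOn_Ioc_of_le zero_le_one,
    ← integrableOn_Icc_iff_integrableOn_Ioc, IntegrableOn, ← hlaw] at hf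
  exact hf.comp_aemeasurable hX

theorem integral_comp_of_map_eq_uniform (hX : AEMeasurable X μ)
    (hlaw : μ.map X = volume.restrict (Set.Icc 0 1)) (hf : Measurable f) :
    ∫ ω, f (X ω) ∂μ = ∫ u in (0:ℝ)..1, f u := by
  rw [← integral_map hX hf.aestronglyMeasurable, hlaw, integral_Icc_eq_integral_Ioc,
    intervalIntegral.integral_of_le zero_le_one]

end Law

section Factor

open intervalIntegral

/-- The factors of the bound `Y_N / G_N ≤ ∏_{k < N} seminalFactor k (U k)`. -/
noncomputable def seminalFactor : ℕ → ℝ → ℝ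
  | 0, u => (1 - √u) / √u
  | _ + 1, u => 1 - √u

theorem measurable_seminalFactor (k : ℕ) : Measurable (seminalFactor k) := by
  cases k <;> unfold seminalFactor <;> fun_prop

theorem seminalFactor_zero_eqOn :
    Set.EqOn (seminalFactor 0) (fun u ↦ u ^ (-(1 / 2) : ℝ) - 1) (Set.uIoo 0 1) := by
  intro u hu
  have hu : 0 < u := by simpa using hu.1
  dsimp only
  rw [seminalFactor, sub_div, div_self (Real.sqrt_pos.2 hu).ne', Real.rpow_neg hu.le,
    ← Real.sqrt_eq_rpow, one_div]

theorem seminalFactor_succ (k : ℕ) :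
    seminalFactor (k + 1) = fun u ↦ 1 - u ^ (1 / 2 : ℝ) := by
  ext u
  rw [seminalFactor, Real.sqrt_eq_rpow]

theorem intervalIntegrable_seminalFactor (k : ℕ) :
    IntervalIntegrable (seminalFactor k) volume 0 1 := by
  cases k with
  | zero =>
    exact ((intervalIntegrable_rpow' (by norm_num)).sub intervalIntegrable_const).congr_uIoo
      seminalFactor_zero_eqOn.symm
  | succ k =>
    rw [seminalFactor_succ]
    exact intervalIntegrable_const.sub (intervalIntegrable_rpow' (by norm_num))

theorem integral_seminalFactor_zero : ∫ u in (0:ℝ)..1, seminalFactor 0 u = 1 := by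
  rw [integral_congr_uIoo seminalFactor_zero_eqOn,
    integral_sub (intervalIntegrable_rpow' (by norm_num)) intervalIntegrable_const,
    integral_rpow (Or.inl (by norm_num))]
  norm_num

theorem integral_seminalFactor_succ (k : ℕ) :
    ∫ u in (0:ℝ)..1, seminalFactor (k + 1) u = 1 / 3 := by
  rw [seminalFactor_succ,
    integral_sub intervalIntegrable_const (intervalIntegrable_rpow' (by norm_num)),
    integral_rpow (Or.inl (by norm_num))]
  norm_num

end Factor

section IndependentUniform

variable {Ω : Type*} [MeasurableSpace Ω] {μ : Measure Ω} {U : ℕ → Ω → ℝ}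

theorem iIndepFun_seminalFactor (hindep : iIndepFun U μ) :
    iIndepFun (fun k ω ↦ seminalFactor k (U k ω)) μ :=
  hindep.comp _ measurable_seminalFactor

theorem integrable_prod_seminalFactor (hindep : iIndepFun U μ) (hUm : ∀ n, Measurable (U n))
    (hU : ∀ n, μ.map (U n) = volume.restrict (Set.Icc 0 1)) (n : ℕ) :
    Integrable (fun ω ↦ ∏ k ∈ range n, seminalFactor k (U k ω)) μ :=
  (iIndepFun_seminalFactor hindep).integrable_finsetProd
    (fun k ↦ (measurable_seminalFactor k).comp (hUm k))
    (fun k ↦ integrable_comp_of_map_eq_uniform (hUm k).aemeasurable (hU k)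
      (intervalIntegrable_seminalFactor k)) _

theorem integral_prod_seminalFactor (hindep : iIndepFun U μ) (hUm : ∀ n, Measurable (U n))
    (hU : ∀ n, μ.map (U n) = volume.restrict (Set.Icc 0 1)) (n : ℕ) :
    ∫ ω, ∏ k ∈ range (n + 1), seminalFactor k (U k ω) ∂μ = (1 / 3) ^ n := by
  simp_rw [(iIndepFun_seminalFactor hindep).integral_finsetProd
      (fun k ↦ (measurable_seminalFactor k).comp (hUm k)),
    integral_comp_of_map_eq_uniform (hUm _).aemeasurable (hU _) (measurable_seminalFactor _),
    prod_range_succ', integral_seminalFactor_succ, integral_seminalFactor_zero, prod_const,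
    card_range, mul_one]

end IndependentUniform

section Recursion

variable {y s g u e : ℕ → ℝ}

theorem mem_Ioc_of_one_div_recursion (hs0 : s 0 = 1) (he : ∀ n, 0 ≤ e n)
    (hs : ∀ n, 1 / s (n + 1) = 1 / s n + 4 / y n ^ 2 * e n) (n : ℕ) :
    s n ∈ Set.Ioc 0 1 := by
  have hmono : Monotone fun n ↦ 1 / s n := monotone_nat_of_le_succ fun n ↦ by
    rw [hs n]
    exact le_add_of_nonneg_right (mul_nonneg (by positivity) (he n))
  have h : 1 ≤ (s n)⁻¹ := by simpa [hs0] using hmono (Nat.zero_le n)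
  have hpos : 0 < s n := inv_pos.mp (one_pos.trans_le h)
  exact ⟨hpos, (one_le_inv₀ hpos).mp h⟩

theorem eq_mul_prod_of_recursion (hy : ∀ n, y (n + 1) = y n * (1 - √(u n))) (n : ℕ) :
    y n = y 0 * ∏ k ∈ range n, (1 - √(u k)) := by
  induction n with
  | zero => simp
  | succ n ih => rw [hy, ih, prod_range_succ, mul_assoc]

theorem div_le_prod_seminalFactor (hu : ∀ n, u n ∈ Set.Ioc 0 1) (he : ∀ n, 0 ≤ e n)
    (hs0 : s 0 = 1) (hy0 : 0 ≤ y 0) (hg0 : 0 ≤ g 0)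
    (hy : ∀ n, y (n + 1) = y n * (1 - √(u n)))
    (hs : ∀ n, 1 / s (n + 1) = 1 / s n + 4 / y n ^ 2 * e n)
    (hg : ∀ n, g (n + 1) = g n + y n / s (n + 1) * √(u n)) (n : ℕ) :
    y (n + 1) / g (n + 1) ≤ ∏ k ∈ range (n + 1), seminalFactor k (u k) := by
  have hsqrt_pos k : 0 < √(u k) := Real.sqrt_pos.2 (hu k).1
  have hsqrt_le k : √(u k) ≤ 1 := Real.sqrt_le_one.2 (hu k).2
  have hs_Ioc := mem_Ioc_of_one_div_recursion hs0 he hs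
  have hy_nonneg k : 0 ≤ y k := by
    rw [eq_mul_prod_of_recursion hy]
    exact mul_nonneg hy0 (prod_nonneg fun j _ ↦ sub_nonneg.2 (hsqrt_le j))
  have hg_step k : g k + y k * √(u k) ≤ g (k + 1) := by
    rw [hg]
    gcongr
    exact le_div_self (hy_nonneg k) (hs_Ioc _).1 (hs_Ioc _).2
  have hg_mono : Monotone g := monotone_nat_of_le_succ fun k ↦
    (le_add_of_nonneg_right (mul_nonneg (hy_nonneg k) (hsqrt_pos k).le)).trans (hg_step k)
  have hg_lower : y 0 * √(u 0) ≤ g (n + 1) :=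
    (le_add_of_nonneg_left hg0).trans ((hg_step 0).trans (hg_mono (by omega)))
  have hprod : ∏ k ∈ range (n + 1), seminalFactor k (u k)
      = (∏ k ∈ range n, (1 - √(u (k + 1)))) * ((1 - √(u 0)) / √(u 0)) :=
    prod_range_succ' _ n
  rcases hy0.eq_or_lt with hy0 | hy0
  · rw [eq_mul_prod_of_recursion hy, ← hy0, zero_mul, zero_div, hprod]
    exact mul_nonneg (prod_nonneg fun j _ ↦ sub_nonneg.2 (hsqrt_le _))
      (div_nonneg (sub_nonneg.2 (hsqrt_le 0)) (hsqrt_pos 0).le)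
  calc y (n + 1) / g (n + 1) ≤ y (n + 1) / (y 0 * √(u 0)) :=
        div_le_div_of_nonneg_left (hy_nonneg _) (mul_pos hy0 (hsqrt_pos 0)) hg_lower
    _ = ∏ k ∈ range (n + 1), seminalFactor k (u k) := by
        rw [eq_mul_prod_of_recursion hy, prod_range_succ', hprod]
        field_simp [(hsqrt_pos 0).ne']

end Recursion

theorem seminal_curve_YoverG_bound
    {Ω : Type*} [MeasurableSpace Ω] (μ : Measure Ω) [IsProbabilityMeasure μ]
    -- the driving random variables: `U n`, `E n` represent the mathematical
    -- `U_{n+1}`, `E_{n+1}` (indexing shifted by one)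
    (U E : ℕ → Ω → ℝ) (Γ V : Ω → ℝ) (Y S G : ℕ → Ω → ℝ)
    (hUm : ∀ n, Measurable (U n)) (hEm : ∀ n, Measurable (E n))
    (hΓm : Measurable Γ) (hVm : Measurable V)
    -- each `U n` and `V` is uniformly distributed on `[0,1]`
    (hU : ∀ n, μ.map (U n) = volume.restrict (Set.Icc (0:ℝ) 1))
    (hV : μ.map V = volume.restrict (Set.Icc (0:ℝ) 1))
    -- each `E n` has the standard exponential distribution (rate 1)
    (hE : ∀ n, μ.map (E n) = expMeasure 1)
    -- `Γ` has the Rayleigh(√2) distribution: `P(Γ > γ) = exp (-γ²/4)` for `γ ≥ 0`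
    (hΓ : ∀ γ : ℝ, 0 ≤ γ → μ {ω | Γ ω > γ} = ENNReal.ofReal (Real.exp (-(γ ^ 2) / 4)))
    -- `(U n)`, `(E n)`, `Γ`, `V` are mutually independent
    (hindep : iIndepFun
      (Sum.elim U (Sum.elim E (fun b : Bool => bif b then Γ else V))) μ)
    -- initial conditions `S 0 = 1`, `Y 0 = (1 - V)·Γ`, `G 0 = V·Γ`
    (hS0 : ∀ ω, S 0 ω = 1)
    (hY0 : ∀ ω, Y 0 ω = (1 - V ω) * Γ ω)
    (hG0 : ∀ ω, G 0 ω = V ω * Γ ω)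
    -- the seminal-curve recursion
    (hYrec : ∀ n ω, Y (n + 1) ω = Y n ω * (1 - Real.sqrt (U n ω)))
    (hSrec : ∀ n ω, 1 / S (n + 1) ω = 1 / S n ω + 4 / (Y n ω) ^ 2 * E n ω)
    (hGrec : ∀ n ω, G (n + 1) ω = G n ω + Y n ω / S (n + 1) ω * Real.sqrt (U n ω))
    :
    ∀ N : ℕ, 1 ≤ N →
      ∫ ω, Y N ω / G N ω ∂μ ≤ (3:ℝ) ^ (-((N:ℤ) - 1)) := by
  intro N hN
  obtain ⟨M, rfl⟩ : ∃ M, N = M + 1 := ⟨N - 1, by omega⟩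
  have hU_Ioc : ∀ᵐ ω ∂μ, ∀ k, U k ω ∈ Set.Ioc 0 1 :=
    ae_all_iff.2 fun k ↦ ae_mem_Ioc_of_map_eq_uniform (hUm k).aemeasurable (hU k)
  have hE_nonneg : ∀ᵐ ω ∂μ, ∀ k, 0 ≤ E k ω :=
    ae_all_iff.2 fun k ↦ ae_of_ae_map (hEm k).aemeasurable (hE k ▸ ae_nonneg_gammaMeasure 1 1)
  have hV_Icc : ∀ᵐ ω ∂μ, V ω ∈ Set.Icc 0 1 :=
    ae_mem_of_map_eq_restrict hVm.aemeasurable measurableSet_Icc hV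
  have hΓ_nonneg : ∀ᵐ ω ∂μ, 0 ≤ Γ ω :=
    ((ae_iff_measure_eq (hΓm measurableSet_Ioi).nullMeasurableSet).2
      (by simp [hΓ 0 le_rfl])).mono fun ω h ↦ le_of_lt h
  have hle : ∀ᵐ ω ∂μ,
      Y (M + 1) ω / G (M + 1) ω ≤ ∏ k ∈ range (M + 1), seminalFactor k (U k ω) := by
    filter_upwards [hU_Ioc, hE_nonneg, hV_Icc, hΓ_nonneg] with ω hUω hEω hVω hΓω
    exact div_le_prod_seminalFactor (y := (Y · ω)) (s := (S · ω)) (g := (G · ω)) hUω hEω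
      (hS0 ω) (by rw [hY0]; exact mul_nonneg (sub_nonneg.2 hVω.2) hΓω)
      (by rw [hG0]; exact mul_nonneg hVω.1 hΓω) (hYrec · ω) (hSrec · ω) (hGrec · ω) M
  have hU_indep : iIndepFun U μ := hindep.precomp (g := Sum.inl) Sum.inl_injective
  rw [show (3:ℝ) ^ (-((M + 1 : ℕ) - 1 : ℤ)) = (1 / 3) ^ M by simp,
    ← integral_prod_seminalFactor hU_indep hUm hU M]
  by_cases hint : Integrable (fun ω ↦ Y (M + 1) ω / G (M + 1) ω) μ
  · exact integral_mono_ae hint (integrable_prod_seminalFactor hU_indep hUm hU _) hle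
  · rw [integral_undef hint, integral_prod_seminalFactor hU_indep hUm hU M]
    positivity
end

section
/- Fix σ₀ ∈ ℝ and b₀ ∈ ℝ, and consider the reference line y = b₀ + σ₀·x. Parametrize a non-vertical line by (σ, x), where σ is its slope and x is the abscissa of its intersection with the reference line, so that its intercepts on the axes x = −1 and x = +1 are given by Φ(σ, x) = (b₀ + σ₀·x − σ·(1 + x), b₀ + σ₀·x + σ·(1 − x)). Then Φ restricted to the half-plane {(σ, x) : σ < σ₀} is injective with image {(y₋, y₊) : (y₊ − y₋)/2 < σ₀}, and the pushforward under this restriction of the measure with density (1/2)·(σ₀ − σ) with respect to Lebesgue measure λ₂ equals (1/4)·λ₂ restricted to that image; symmetrically, Φ restricted to {(σ, x) : σ > σ₀} is injective and pushes the measure with density (1/2)·(σ − σ₀) forward to (1/4)·λ₂ restricted to {(y₋, y₊) : (y₊ − y₋)/2 > σ₀}. (Equivalently: in slope/reference-intersection coordinates the improper line-process intensity ν = (1/4) dy₋ dy₊ takes the form dν = (1/2)|σ − σ₀| dσ dx.) -/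
/-!
In the coordinates `(σ, x)` the half-difference of the intercepts is the slope `σ` and their
mean is `b₀ + (σ₀ - σ) x`, so the map is a bijection on each half-plane `σ ≠ σ₀`, and its
Jacobian determinant is `2 (σ - σ₀)`. The change of variables formula then turns the density
`|σ - σ₀| / 2 = |det| / 4` into `1/4` times Lebesgue measure on the image.
-/

open MeasureTheory Set

/-- Intercepts on the axes `x = -1` and `x = 1` of the line of slope `p.1` meeting the reference
line `y = b₀ + σ₀ x` at abscissa `p.2`. -/
noncomputable def lineIntercepts (σ₀ b₀ : ℝ) (p : ℝ × ℝ) : ℝ × ℝ :=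
  (b₀ + σ₀ * p.2 - p.1 * (1 + p.2), b₀ + σ₀ * p.2 + p.1 * (1 - p.2))

noncomputable def lineInterceptsDeriv (σ₀ : ℝ) (p : ℝ × ℝ) : ℝ × ℝ →L[ℝ] ℝ × ℝ :=
  ((σ₀ - p.1) • ContinuousLinearMap.snd ℝ ℝ ℝ - (1 + p.2) • ContinuousLinearMap.fst ℝ ℝ ℝ).prod
    ((σ₀ - p.1) • ContinuousLinearMap.snd ℝ ℝ ℝ + (1 - p.2) • ContinuousLinearMap.fst ℝ ℝ ℝ)

section

variable {σ₀ b₀ : ℝ}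

theorem lineIntercepts_snd_sub_fst (p : ℝ × ℝ) :
    (lineIntercepts σ₀ b₀ p).2 - (lineIntercepts σ₀ b₀ p).1 = 2 * p.1 := by
  simp only [lineIntercepts]; ring

theorem lineIntercepts_fst_add_snd (p : ℝ × ℝ) :
    (lineIntercepts σ₀ b₀ p).1 + (lineIntercepts σ₀ b₀ p).2
      = 2 * (b₀ + (σ₀ - p.1) * p.2) := by
  simp only [lineIntercepts]; ring

theorem injOn_lineIntercepts {I : Set ℝ} (hI : σ₀ ∉ I) :
    InjOn (lineIntercepts σ₀ b₀) (Prod.fst ⁻¹' I) := by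
  intro p hp p' _ h
  have hslope : p.1 = p'.1 := by
    have := lineIntercepts_snd_sub_fst (σ₀ := σ₀) (b₀ := b₀) p
    rw [h, lineIntercepts_snd_sub_fst] at this
    linarith
  have hmean : (σ₀ - p.1) * p.2 = (σ₀ - p.1) * p'.2 := by
    have := lineIntercepts_fst_add_snd (σ₀ := σ₀) (b₀ := b₀) p
    rw [h, lineIntercepts_fst_add_snd, ← hslope] at this
    linarith
  have hne : σ₀ - p.1 ≠ 0 := sub_ne_zero.2 fun h' => hI (h' ▸ hp)
  exact Prod.ext hslope (mul_left_cancel₀ hne hmean)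

theorem image_lineIntercepts_fst_preimage {I : Set ℝ} (hI : σ₀ ∉ I) :
    lineIntercepts σ₀ b₀ '' (Prod.fst ⁻¹' I) = (fun q : ℝ × ℝ => (q.2 - q.1) / 2) ⁻¹' I := by
  ext q
  constructor
  · rintro ⟨p, hp, rfl⟩
    simpa [lineIntercepts_snd_sub_fst] using hp
  · intro hq
    set σ := (q.2 - q.1) / 2
    have hne : σ₀ - σ ≠ 0 := sub_ne_zero.2 fun h => hI (h ▸ hq)
    refine ⟨(σ, ((q.1 + q.2) / 2 - b₀) / (σ₀ - σ)), hq, ?_⟩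
    have hx : (σ₀ - σ) * (((q.1 + q.2) / 2 - b₀) / (σ₀ - σ)) = (q.1 + q.2) / 2 - b₀ :=
      mul_div_cancel₀ _ hne
    simp only [lineIntercepts, σ] at hx ⊢
    ext <;> linear_combination hx

theorem hasFDerivAt_lineIntercepts (p : ℝ × ℝ) :
    HasFDerivAt (lineIntercepts σ₀ b₀) (lineInterceptsDeriv σ₀ p) p := by
  have hbase : HasFDerivAt (fun q : ℝ × ℝ => b₀ + σ₀ * q.2)
      ((0 : ℝ × ℝ →L[ℝ] ℝ) + σ₀ • ContinuousLinearMap.snd ℝ ℝ ℝ) p :=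
    (hasFDerivAt_const b₀ p).add (hasFDerivAt_snd.const_mul σ₀)
  have hleft : HasFDerivAt (fun q : ℝ × ℝ => q.1 * (1 + q.2))
      (p.1 • ((0 : ℝ × ℝ →L[ℝ] ℝ) + ContinuousLinearMap.snd ℝ ℝ ℝ) +
        (1 + p.2) • ContinuousLinearMap.fst ℝ ℝ ℝ) p :=
    hasFDerivAt_fst.mul ((hasFDerivAt_const 1 p).add hasFDerivAt_snd)
  have hright : HasFDerivAt (fun q : ℝ × ℝ => q.1 * (1 - q.2))
      (p.1 • ((0 : ℝ × ℝ →L[ℝ] ℝ) - ContinuousLinearMap.snd ℝ ℝ ℝ) +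
        (1 - p.2) • ContinuousLinearMap.fst ℝ ℝ ℝ) p :=
    hasFDerivAt_fst.mul ((hasFDerivAt_const 1 p).sub hasFDerivAt_snd)
  refine ((hbase.sub hleft).prodMk (hbase.add hright)).congr_fderiv ?_
  ext <;> simp [lineInterceptsDeriv, sub_eq_add_neg]

theorem det_lineInterceptsDeriv (p : ℝ × ℝ) :
    (lineInterceptsDeriv σ₀ p).det = 2 * (p.1 - σ₀) := by
  rw [ContinuousLinearMap.det, ← LinearMap.det_toMatrix (Module.Basis.finTwoProd ℝ),
    Matrix.det_fin_two]
  simp [LinearMap.toMatrix_apply, lineInterceptsDeriv, Module.Basis.coe_finTwoProd_repr]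
  ring

theorem map_lineIntercepts_restrict_withDensity_abs_det {I : Set ℝ} (hIm : MeasurableSet I)
    (hI : σ₀ ∉ I) :
    Measure.map (lineIntercepts σ₀ b₀)
        ((volume.restrict (Prod.fst ⁻¹' I)).withDensity fun p => ENNReal.ofReal (2 * |p.1 - σ₀|))
      = volume.restrict ((fun q : ℝ × ℝ => (q.2 - q.1) / 2) ⁻¹' I) := by
  have := map_withDensity_abs_det_fderiv_eq_addHaar volume
    (measurable_fst hIm).nullMeasurableSet
    (fun p _ => (hasFDerivAt_lineIntercepts (b₀ := b₀) p).hasFDerivWithinAt)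
    (injOn_lineIntercepts hI)
  simpa [det_lineInterceptsDeriv, abs_mul, image_lineIntercepts_fst_preimage hI]
    using this

theorem map_lineIntercepts_withDensity_restrict {I : Set ℝ} (hIm : MeasurableSet I)
    (hI : σ₀ ∉ I) {f : ℝ × ℝ → ℝ} (hf : ∀ p : ℝ × ℝ, p.1 ∈ I → f p = |p.1 - σ₀| / 2) :
    Measure.map (lineIntercepts σ₀ b₀)
        ((volume.withDensity fun p => ENNReal.ofReal (f p)).restrict (Prod.fst ⁻¹' I))
      = ENNReal.ofReal (1 / 4) • volume.restrict ((fun q : ℝ × ℝ => (q.2 - q.1) / 2) ⁻¹' I) := by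
  have hdensity : (fun p => ENNReal.ofReal (f p)) =ᵐ[volume.restrict (Prod.fst ⁻¹' I)]
      ENNReal.ofReal (1 / 4) • fun p => ENNReal.ofReal (2 * |p.1 - σ₀|) := by
    filter_upwards [ae_restrict_mem (measurable_fst hIm)] with p hp
    rw [Pi.smul_apply, smul_eq_mul, ← ENNReal.ofReal_mul (by norm_num), hf p hp]
    ring_nf
  rw [restrict_withDensity (measurable_fst hIm), withDensity_congr_ae hdensity,
    withDensity_smul' _ _ ENNReal.ofReal_ne_top, Measure.map_smul,
    map_lineIntercepts_restrict_withDensity_abs_det hIm hI]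

end

/-- Change of line coordinates to slope/reference-intersection coordinates `(σ, x)`
relative to the reference line `y = b₀ + σ₀·x`:  the map
`Φ (σ, x) = (b₀ + σ₀·x - σ·(1 + x), b₀ + σ₀·x + σ·(1 - x))` sends `(σ, x)` to the
intercepts `(y₋, y₊)` of the corresponding line on the axes `x = -1`, `x = +1`.
On `{σ < σ₀}` it is injective with image `{(y₋, y₊) : (y₊ - y₋)/2 < σ₀}` and pushes
the measure with density `(1/2)·(σ₀ - σ)` forward to `(1/4)·λ₂` on the image; on
`{σ > σ₀}` it is injective and pushes the measure with density `(1/2)·(σ - σ₀)`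
forward to `(1/4)·λ₂` on `{(y₋, y₊) : (y₊ - y₋)/2 > σ₀}`.  Equivalently, in these
coordinates the intensity `ν = (1/4) dy₋ dy₊` takes the form
`dν = (1/2)·|σ - σ₀| dσ dx`. -/
theorem improper_intensity_slope_coords (σ₀ b₀ : ℝ) :
    Set.InjOn
        (fun p : ℝ × ℝ =>
          (b₀ + σ₀ * p.2 - p.1 * (1 + p.2), b₀ + σ₀ * p.2 + p.1 * (1 - p.2)))
        {p : ℝ × ℝ | p.1 < σ₀}
    ∧ (fun p : ℝ × ℝ =>
          (b₀ + σ₀ * p.2 - p.1 * (1 + p.2), b₀ + σ₀ * p.2 + p.1 * (1 - p.2))) ''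
        {p : ℝ × ℝ | p.1 < σ₀} = {q : ℝ × ℝ | (q.2 - q.1) / 2 < σ₀}
    ∧ Measure.map
        (fun p : ℝ × ℝ =>
          (b₀ + σ₀ * p.2 - p.1 * (1 + p.2), b₀ + σ₀ * p.2 + p.1 * (1 - p.2)))
        (((volume : Measure (ℝ × ℝ)).withDensity
            (fun p => ENNReal.ofReal (1 / 2 * (σ₀ - p.1)))).restrict
          {p : ℝ × ℝ | p.1 < σ₀})
      = ENNReal.ofReal (1 / 4) •
          (volume : Measure (ℝ × ℝ)).restrict {q : ℝ × ℝ | (q.2 - q.1) / 2 < σ₀}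
    ∧ Set.InjOn
        (fun p : ℝ × ℝ =>
          (b₀ + σ₀ * p.2 - p.1 * (1 + p.2), b₀ + σ₀ * p.2 + p.1 * (1 - p.2)))
        {p : ℝ × ℝ | σ₀ < p.1}
    ∧ (fun p : ℝ × ℝ =>
          (b₀ + σ₀ * p.2 - p.1 * (1 + p.2), b₀ + σ₀ * p.2 + p.1 * (1 - p.2))) ''
        {p : ℝ × ℝ | σ₀ < p.1} = {q : ℝ × ℝ | σ₀ < (q.2 - q.1) / 2}
    ∧ Measure.map
        (fun p : ℝ × ℝ =>
          (b₀ + σ₀ * p.2 - p.1 * (1 + p.2), b₀ + σ₀ * p.2 + p.1 * (1 - p.2)))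
        (((volume : Measure (ℝ × ℝ)).withDensity
            (fun p => ENNReal.ofReal (1 / 2 * (p.1 - σ₀)))).restrict
          {p : ℝ × ℝ | σ₀ < p.1})
      = ENNReal.ofReal (1 / 4) •
          (volume : Measure (ℝ × ℝ)).restrict {q : ℝ × ℝ | σ₀ < (q.2 - q.1) / 2} := by
  have hlt : σ₀ ∉ Iio σ₀ := lt_irrefl σ₀
  have hgt : σ₀ ∉ Ioi σ₀ := lt_irrefl σ₀
  refine ⟨injOn_lineIntercepts hlt, image_lineIntercepts_fst_preimage hlt, ?_,
    injOn_lineIntercepts hgt, image_lineIntercepts_fst_preimage hgt, ?_⟩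
  · refine map_lineIntercepts_withDensity_restrict measurableSet_Iio hlt fun p hp => ?_
    rw [abs_of_neg (sub_neg.2 hp)]
    ring
  · refine map_lineIntercepts_withDensity_restrict measurableSet_Ioi hgt fun p hp => ?_
    rw [abs_of_pos (sub_pos.2 hp)]
    ring
end
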